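/- Let (M, m) be a measure space with total mass m(M) = m₀ ∈ (0,∞), set c = 1/m₀, and let p : (0,∞) × M × M → ℝ be measurable, symmetric in its space variables (p(t,x,y) = p(t,y,x)), satisfying ∫_M p(t,x,z) m(dz) = 1 for all t > 0 and x ∈ M, and the Chapman–Kolmogorov identity ∫_M p(s,x,z)·p(t,z,y) m(dz) = p(s+t,x,y) for all s,t > 0 and x,y ∈ M. Fix reals α, β > 0 and points x, y ∈ M such that: (i) the function (s,t,z) ↦ s^{α−1}·t^{β−1}·|p(s,x,z) − c|·|p(t,z,y) − c| is integrable on (0,∞) × (0,∞) × M; (ii) for m-almost every z, s ↦ s^{α−1}(p(s,x,z) − c) and t ↦ t^{β−1}(p(t,z,y) − c) are integrable on (0,∞); and (iii) u ↦ u^{α+β−1}(p(u,x,y) − c) is integrable on (0,∞). Define g_γ(x,y) = Γ(γ)⁻¹·∫₀^∞ t^{γ−1}·(p(t,x,y) − c) dt for γ > 0. Then ∫_M g_α(x,z)·g_β(z,y) m(dz) = g_{α+β}(x,y). -/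

import Mathlib

/-!
Expanding the product `g_α(x,z) g_β(z,y)` turns the left side into an integral over
`(s, t, z)`, absolutely convergent by (i). Integrating in `z` first, the centred
Chapman–Kolmogorov identity `∫ (p(s,x,z) - c)(p(t,z,y) - c) dz = p(s+t,x,y) - c` (which holds
because `p` has unit mass and `c · m(M) = 1`) leaves
`∫∫ s^(α-1) t^(β-1) (p(s+t,x,y) - c) ds dt`. The shear `(s, t) ↦ (s, s + t)` and the Beta
integral `∫₀ᵘ s^(α-1) (u-s)^(β-1) ds = B(α,β) u^(α+β-1)` turn this into
`B(α,β) ∫₀^∞ u^(α+β-1) (p(u,x,y) - c) du`, and `B(α,β) = Γ(α)Γ(β)/Γ(α+β)`.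
-/

open MeasureTheory Set

theorem integral_Ioo_rpow_mul_rpow_sub {α β u : ℝ} (hα : 0 < α) (hβ : 0 < β) (hu : 0 < u) :
    ∫ s in Ioo 0 u, s ^ (α - 1) * (u - s) ^ (β - 1)
      = ProbabilityTheory.beta α β * u ^ (α + β - 1) := by
  have hcpow : ∀ s ∈ uIcc 0 u, ((s ^ (α - 1) * (u - s) ^ (β - 1) : ℝ) : ℂ)
      = (s : ℂ) ^ ((α : ℂ) - 1) * ((u : ℂ) - s) ^ ((β : ℂ) - 1) := by
    intro s hs
    rw [uIcc_of_le hu.le] at hs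
    push_cast
    rw [Complex.ofReal_cpow hs.1, Complex.ofReal_cpow (sub_nonneg.2 hs.2)]
    push_cast
    ring_nf
  have hscaled := Complex.betaIntegral_scaled α β hu
  rw [← intervalIntegral.integral_congr hcpow, intervalIntegral.integral_ofReal] at hscaled
  have hre := congrArg Complex.re hscaled
  rw [Complex.ofReal_re, ← Complex.ofReal_add, ← Complex.ofReal_one, ← Complex.ofReal_sub,
    ← Complex.ofReal_cpow hu.le, Complex.re_ofReal_mul,
    ← ProbabilityTheory.beta_eq_betaIntegralReal α β hα hβ] at hre
  rw [← integral_Ioc_eq_integral_Ioo, ← intervalIntegral.integral_of_le hu.le, hre, mul_comm]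

theorem integral_Ioi_prod_rpow_mul_rpow_mul_comp_add {α β : ℝ} (hα : 0 < α) (hβ : 0 < β)
    {φ : ℝ → ℝ}
    (hφ : Integrable (fun q : ℝ × ℝ => q.1 ^ (α - 1) * q.2 ^ (β - 1) * φ (q.1 + q.2))
      ((volume.restrict (Ioi 0)).prod (volume.restrict (Ioi 0)))) :
    ∫ q, q.1 ^ (α - 1) * q.2 ^ (β - 1) * φ (q.1 + q.2)
        ∂((volume.restrict (Ioi 0)).prod (volume.restrict (Ioi 0)))
      = ProbabilityTheory.beta α β * ∫ u in Ioi 0, u ^ (α + β - 1) * φ u := by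
  set T : Set (ℝ × ℝ) := {q | 0 < q.1 ∧ q.1 < q.2}
  set ψ : ℝ × ℝ → ℝ := fun q => q.1 ^ (α - 1) * (q.2 - q.1) ^ (β - 1) * φ q.2
  have hS := measurePreserving_prod_add (volume : Measure ℝ) volume
  have hS_emb : MeasurableEmbedding (fun q : ℝ × ℝ => (q.1, q.1 + q.2)) :=
    (MeasurableEquiv.shearAddRight ℝ).measurableEmbedding
  have hpre : (fun q : ℝ × ℝ => (q.1, q.1 + q.2)) ⁻¹' T = Ioi 0 ×ˢ Ioi 0 := by
    ext q; simp [T]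
  have hψ : (fun q : ℝ × ℝ => q.1 ^ (α - 1) * q.2 ^ (β - 1) * φ (q.1 + q.2))
      = ψ ∘ fun q => (q.1, q.1 + q.2) := by
    ext q; simp [ψ]
  rw [Measure.prod_restrict, hψ, ← hpre] at hφ ⊢
  have hT : MeasurableSet T :=
    (measurableSet_lt measurable_const measurable_fst).inter
      (measurableSet_lt measurable_fst measurable_snd)
  have hψT : Integrable (T.indicator ψ) (volume.prod volume) :=
    (integrable_indicator_iff hT).2 ((hS.integrableOn_comp_preimage hS_emb).1 hφ)
  have hslice : ∀ u, ∫ s, T.indicator ψ (s, u)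
      = (Ioi 0).indicator
          (fun u => ProbabilityTheory.beta α β * (u ^ (α + β - 1) * φ u)) u := by
    intro u
    have hTu : (fun s => T.indicator ψ (s, u))
        = (Ioo 0 u).indicator (fun s => s ^ (α - 1) * (u - s) ^ (β - 1) * φ u) := by
      ext s; simp only [indicator_apply, T, ψ]; rfl
    rw [hTu, integral_indicator measurableSet_Ioo, integral_mul_const]
    rcases lt_or_ge 0 u with hu | hu
    · rw [indicator_of_mem (show u ∈ Ioi 0 from hu), integral_Ioo_rpow_mul_rpow_sub hα hβ hu]
      ring
    · rw [indicator_of_notMem (show u ∉ Ioi 0 from not_lt.2 hu), Ioo_eq_empty (not_lt.2 hu),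
        Measure.restrict_empty, integral_zero_measure, zero_mul]
  rw [Function.comp_def, hS.setIntegral_preimage_emb hS_emb ψ T, ← integral_indicator hT,
    integral_prod_symm _ hψT]
  simp_rw [hslice]
  rw [integral_indicator measurableSet_Ioi, integral_const_mul]

theorem ae_pos_prod_Ioi :
    ∀ᵐ q ∂((volume.restrict (Ioi (0 : ℝ))).prod (volume.restrict (Ioi (0 : ℝ)))),
      0 < q.1 ∧ 0 < q.2 := by
  rw [Measure.prod_restrict]
  exact ae_restrict_mem (measurableSet_Ioi.prod measurableSet_Ioi)

theorem integral_sub_const_mul_sub_const {X : Type*} [MeasurableSpace X] {μ : Measure X}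
    [IsFiniteMeasure μ] {f g : X → ℝ} {c : ℝ} (hc : c * μ.real univ = 1)
    (hf : ∫ z, f z ∂μ = 1) (hg : ∫ z, g z ∂μ = 1)
    (hfg : Integrable (fun z => (f z - c) * (g z - c)) μ) :
    ∫ z, (f z - c) * (g z - c) ∂μ = ∫ z, f z * g z ∂μ - c := by
  have hf_int : Integrable (fun z => c * f z) μ :=
    (Integrable.of_integral_ne_zero (by simp [hf])).const_mul c
  have hg_int : Integrable (fun z => c * g z) μ :=
    (Integrable.of_integral_ne_zero (by simp [hg])).const_mul c
  have hsum : Integrable (fun z => c * f z + c * g z) μ := hf_int.add hg_int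
  have hrest : Integrable (fun z => c * f z + c * g z - c * c) μ :=
    hsum.sub (integrable_const _)
  have hprod : Integrable (fun z => f z * g z) μ :=
    (hfg.add hrest).congr (ae_of_all _ fun z => by simp only [Pi.add_apply]; ring)
  calc ∫ z, (f z - c) * (g z - c) ∂μ
      = ∫ z, f z * g z - (c * f z + c * g z - c * c) ∂μ := by congr 1; ext z; ring
    _ = ∫ z, f z * g z ∂μ - (c * 1 + c * 1 - c * (c * μ.real univ)) := by
        rw [integral_sub hprod hrest, integral_sub hsum (integrable_const _),
          integral_add hf_int hg_int, integral_const_mul, integral_const_mul, hf, hg,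
          integral_const, smul_eq_mul]
        ring
    _ = ∫ z, f z * g z ∂μ - c := by rw [hc]; ring

section Kernel

variable {M : Type*} [MeasurableSpace M] {m : Measure M} {p : ℝ → M → M → ℝ} {c : ℝ}

theorem integral_sub_const_mul_sub_const_of_chapman_kolmogorov [IsFiniteMeasure m]
    (hc : c * m.real univ = 1)
    (hp_symm : ∀ t : ℝ, 0 < t → ∀ x y : M, p t x y = p t y x)
    (hp_mass : ∀ t : ℝ, 0 < t → ∀ x : M, ∫ z, p t x z ∂m = 1)
    (hp_CK : ∀ s t : ℝ, 0 < s → 0 < t → ∀ x y : M,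
      ∫ z, p s x z * p t z y ∂m = p (s + t) x y)
    {s t : ℝ} (hs : 0 < s) (ht : 0 < t) (x y : M)
    (hint : Integrable (fun z => (p s x z - c) * (p t z y - c)) m) :
    ∫ z, (p s x z - c) * (p t z y - c) ∂m = p (s + t) x y - c := by
  have hmass_y : ∫ z, p t z y ∂m = 1 :=
    (integral_congr_ae (ae_of_all _ fun z => hp_symm t ht z y)).trans (hp_mass t ht y)
  rw [integral_sub_const_mul_sub_const hc (hp_mass s hs x) hmass_y hint, hp_CK s t hs ht]

theorem integrable_rpow_mul_rpow_mul_kernel_sub_const [SFinite m]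
    (hp_meas : Measurable fun q : ℝ × M × M => p q.1 q.2.1 q.2.2) {α β : ℝ} {x y : M}
    (h_i : Integrable
      (fun q : ℝ × ℝ × M =>
        q.1 ^ (α - 1) * q.2.1 ^ (β - 1) * |p q.1 x q.2.2 - c| * |p q.2.1 q.2.2 y - c|)
      ((volume.restrict (Ioi (0 : ℝ))).prod ((volume.restrict (Ioi (0 : ℝ))).prod m))) :
    Integrable (fun q : (ℝ × ℝ) × M =>
        q.1.1 ^ (α - 1) * q.1.2 ^ (β - 1) * ((p q.1.1 x q.2 - c) * (p q.1.2 q.2 y - c)))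
      (((volume.restrict (Ioi (0 : ℝ))).prod (volume.restrict (Ioi (0 : ℝ)))).prod m) := by
  have hmaj := ((measurePreserving_prodAssoc _ _ m).integrable_comp_emb
    MeasurableEquiv.prodAssoc.measurableEmbedding).2 h_i
  have hpx : Measurable fun q : (ℝ × ℝ) × M => p q.1.1 x q.2 :=
    hp_meas.comp (measurable_fst.fst.prodMk (measurable_const.prodMk measurable_snd))
  have hpy : Measurable fun q : (ℝ × ℝ) × M => p q.1.2 q.2 y :=
    hp_meas.comp (measurable_fst.snd.prodMk (measurable_snd.prodMk measurable_const))
  refine hmaj.mono' (by fun_prop) ?_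
  filter_upwards [Measure.quasiMeasurePreserving_fst.ae ae_pos_prod_Ioi] with q hq
  simp only [Function.comp_apply, Real.norm_eq_abs, abs_mul,
    abs_of_pos (Real.rpow_pos_of_pos hq.1 _), abs_of_pos (Real.rpow_pos_of_pos hq.2 _)]
  exact (mul_assoc _ _ _).symm.le

end Kernel

theorem stmt9_general {M : Type*} [MeasurableSpace M] (m : Measure M)
    (m₀ : ℝ) (hm₀ : 0 < m₀) (hmass : m Set.univ = ENNReal.ofReal m₀)
    (c : ℝ) (hc : c = 1 / m₀)
    (p : ℝ → M → M → ℝ)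
    (hp_meas : Measurable fun q : ℝ × M × M => p q.1 q.2.1 q.2.2)
    (hp_symm : ∀ t : ℝ, 0 < t → ∀ x y : M, p t x y = p t y x)
    (hp_mass : ∀ t : ℝ, 0 < t → ∀ x : M, ∫ z, p t x z ∂m = 1)
    (hp_CK : ∀ s t : ℝ, 0 < s → 0 < t → ∀ x y : M,
      ∫ z, p s x z * p t z y ∂m = p (s + t) x y)
    (α β : ℝ) (hα : 0 < α) (hβ : 0 < β) (x y : M)
    (h_i : Integrable
      (fun q : ℝ × ℝ × M =>
        q.1 ^ (α - 1) * q.2.1 ^ (β - 1) * |p q.1 x q.2.2 - c| * |p q.2.1 q.2.2 y - c|)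
      ((volume.restrict (Ioi (0 : ℝ))).prod ((volume.restrict (Ioi (0 : ℝ))).prod m))) :
    ∫ z, ((Real.Gamma α)⁻¹ * ∫ s in Ioi (0 : ℝ), s ^ (α - 1) * (p s x z - c)) *
        ((Real.Gamma β)⁻¹ * ∫ t in Ioi (0 : ℝ), t ^ (β - 1) * (p t z y - c)) ∂m
      = (Real.Gamma (α + β))⁻¹ *
          ∫ u in Ioi (0 : ℝ), u ^ (α + β - 1) * (p u x y - c) := by
  have : IsFiniteMeasure m := ⟨by simp [hmass]⟩
  have hcm : c * m.real univ = 1 := by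
    rw [measureReal_def, hmass, ENNReal.toReal_ofReal hm₀.le, hc, one_div_mul_cancel hm₀.ne']
  set ν := volume.restrict (Ioi (0 : ℝ))
  set G : (ℝ × ℝ) × M → ℝ := fun q =>
    q.1.1 ^ (α - 1) * q.1.2 ^ (β - 1) * ((p q.1.1 x q.2 - c) * (p q.1.2 q.2 y - c))
  have hG : Integrable G ((ν.prod ν).prod m) :=
    integrable_rpow_mul_rpow_mul_kernel_sub_const hp_meas h_i
  have hslice : ∀ᵐ st ∂(ν.prod ν), ∫ z, G (st, z) ∂m
      = st.1 ^ (α - 1) * st.2 ^ (β - 1) * (p (st.1 + st.2) x y - c) := by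
    filter_upwards [hG.prod_right_ae, ae_pos_prod_Ioi] with st hint hst
    have hk : st.1 ^ (α - 1) * st.2 ^ (β - 1) ≠ 0 :=
      (mul_pos (Real.rpow_pos_of_pos hst.1 _) (Real.rpow_pos_of_pos hst.2 _)).ne'
    simp only [G, integral_const_mul] at hint ⊢
    rw [integral_sub_const_mul_sub_const_of_chapman_kolmogorov hcm hp_symm hp_mass hp_CK
      hst.1 hst.2 x y ((integrable_const_mul_iff (isUnit_iff_ne_zero.2 hk) _).1 hint)]
  have hΦ : Integrable (fun st : ℝ × ℝ =>
      st.1 ^ (α - 1) * st.2 ^ (β - 1) * (p (st.1 + st.2) x y - c)) (ν.prod ν) :=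
    hG.integral_prod_left.congr hslice
  calc _ = (Real.Gamma α)⁻¹ * (Real.Gamma β)⁻¹ *
          ∫ z, ∫ st, G (st, z) ∂(ν.prod ν) ∂m := by
        rw [← integral_const_mul]
        congr 1; ext z
        rw [mul_mul_mul_comm, ← integral_prod_mul]
        congr 2; ext st; simp only [G]; ring
    _ = (Real.Gamma α)⁻¹ * (Real.Gamma β)⁻¹ *
          ∫ st, ∫ z, G (st, z) ∂m ∂(ν.prod ν) := by
        rw [← integral_prod_symm _ hG, integral_prod _ hG]
    _ = (Real.Gamma α)⁻¹ * (Real.Gamma β)⁻¹ *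
          (ProbabilityTheory.beta α β * ∫ u, u ^ (α + β - 1) * (p u x y - c) ∂ν) := by
        rw [integral_congr_ae hslice]
        exact congrArg _ (integral_Ioi_prod_rpow_mul_rpow_mul_comp_add
          (φ := fun u => p u x y - c) hα hβ hΦ)
    _ = _ := by
        rw [ProbabilityTheory.beta]
        field_simp [(Real.Gamma_pos_of_pos hα).ne', (Real.Gamma_pos_of_pos hβ).ne']

/-- Semigroup property of the generalized Green kernels: if `p` is a symmetric measurable
kernel with total mass one and satisfying Chapman–Kolmogorov on a measure space of total
mass `m₀ ∈ (0,∞)`, and the stated integrability conditions hold, then with `c = 1/m₀` and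
`g_γ(x,y) = Γ(γ)⁻¹ ∫₀^∞ t^(γ-1) (p(t,x,y) - c) dt` one has
`∫ g_α(x,z) g_β(z,y) m(dz) = g_{α+β}(x,y)`. -/
theorem stmt9 {M : Type*} [MeasurableSpace M] (m : Measure M)
    (m₀ : ℝ) (hm₀ : 0 < m₀) (hmass : m Set.univ = ENNReal.ofReal m₀)
    (c : ℝ) (hc : c = 1 / m₀)
    (p : ℝ → M → M → ℝ)
    (hp_meas : Measurable fun q : ℝ × M × M => p q.1 q.2.1 q.2.2)
    (hp_symm : ∀ t : ℝ, 0 < t → ∀ x y : M, p t x y = p t y x)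
    (hp_mass : ∀ t : ℝ, 0 < t → ∀ x : M, ∫ z, p t x z ∂m = 1)
    (hp_CK : ∀ s t : ℝ, 0 < s → 0 < t → ∀ x y : M,
      ∫ z, p s x z * p t z y ∂m = p (s + t) x y)
    (α β : ℝ) (hα : 0 < α) (hβ : 0 < β) (x y : M)
    (h_i : Integrable
      (fun q : ℝ × ℝ × M =>
        q.1 ^ (α - 1) * q.2.1 ^ (β - 1) * |p q.1 x q.2.2 - c| * |p q.2.1 q.2.2 y - c|)
      ((volume.restrict (Ioi (0 : ℝ))).prod ((volume.restrict (Ioi (0 : ℝ))).prod m)))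
    (h_ii : ∀ᵐ z ∂m,
      IntegrableOn (fun s : ℝ => s ^ (α - 1) * (p s x z - c)) (Ioi 0) ∧
      IntegrableOn (fun t : ℝ => t ^ (β - 1) * (p t z y - c)) (Ioi 0))
    (h_iii : IntegrableOn (fun u : ℝ => u ^ (α + β - 1) * (p u x y - c)) (Ioi 0)) :
    ∫ z, ((Real.Gamma α)⁻¹ * ∫ s in Ioi (0 : ℝ), s ^ (α - 1) * (p s x z - c)) *
        ((Real.Gamma β)⁻¹ * ∫ t in Ioi (0 : ℝ), t ^ (β - 1) * (p t z y - c)) ∂m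
      = (Real.Gamma (α + β))⁻¹ *
          ∫ u in Ioi (0 : ℝ), u ^ (α + β - 1) * (p u x y - c) :=
  stmt9_general m m₀ hm₀ hmass c hc p hp_meas hp_symm hp_mass hp_CK α β hα hβ x y h_i
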